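/- Alternative bound for AllocationScaledGreedy: with weights r_{ij} = 1 if â(j)=i and r_{ij} = n/β otherwise (β ∈ [1,n]), and each job j assigned to a minimizer i_j of r_{ij}t_{ij}, the resulting makespan is at most n·OPT + C(t, â), i.e. at most (n + ρ̂)·OPT where ρ̂ = C(t, â)/OPT. -/

import Mathlib

/-!
A job `j` that the mechanism places on a machine `i ≠ â(j)` pays the full weight `n/β ≥ 1`
there, while its weight on any machine is at most `n/β`; so minimality of `r i j * t i j`
forces `t i j ≤ t k j` for every machine `k`, in particular for `k = σ*(j)`. Hence the load
of machine `i` splits into the jobs recommended to `i` (at most `C(t, â)`) and the others,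
whose total is at most the total work `∑ⱼ t (σ* j) j ≤ n · OPT` of the schedule `σ*`.
-/

open Finset

namespace Scheduling

variable {ι κ : Type*} [DecidableEq ι]

def load [Fintype κ] (t : ι → κ → ℝ) (σ : κ → ι) (i : ι) : ℝ :=
  ∑ j ∈ univ.filter (fun j => σ j = i), t i j

theorem sum_load [Fintype ι] [Fintype κ] (t : ι → κ → ℝ) (σ : κ → ι) :
    ∑ i, load t σ i = ∑ j, t (σ j) j := by
  rw [← sum_fiberwise univ σ (fun j => t (σ j) j)]
  refine sum_congr rfl fun i _ => sum_congr rfl fun j hj => ?_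
  rw [(mem_filter.mp hj).2]

theorem sum_load_le_card_mul_sup' [Fintype ι] [Fintype κ] (hne : (univ : Finset ι).Nonempty)
    (t : ι → κ → ℝ) (σ : κ → ι) :
    ∑ j, t (σ j) j ≤ Fintype.card ι * univ.sup' hne (load t σ) := by
  rw [← sum_load, ← nsmul_eq_mul]
  exact sum_le_card_nsmul _ _ _ fun i hi => le_sup' (load t σ) hi

theorem le_of_min_weighted_of_ne {t r : ι → κ → ℝ} {ahat : κ → ι} {w : ℝ} (hw : 1 ≤ w)
    (hr : ∀ i j, r i j = if ahat j = i then 1 else w) {i : ι} {j : κ}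
    (hmin : ∀ k, r i j * t i j ≤ r k j * t k j) (hi : ahat j ≠ i) (k : ι) (htk : 0 ≤ t k j) :
    t i j ≤ t k j := by
  have hrk : r k j ≤ w := by
    rw [hr]
    split_ifs
    exacts [hw, le_rfl]
  have hri : r i j = w := by rw [hr, if_neg hi]
  refine le_of_mul_le_mul_left ?_ (zero_lt_one.trans_le hw)
  calc w * t i j = r i j * t i j := by rw [hri]
    _ ≤ r k j * t k j := hmin k
    _ ≤ w * t k j := mul_le_mul_of_nonneg_right hrk htk

theorem load_le_load_add_sum [Fintype κ] {t r : ι → κ → ℝ} (ht : ∀ i j, 0 ≤ t i j)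
    {ahat : κ → ι} {w : ℝ} (hw : 1 ≤ w) (hr : ∀ i j, r i j = if ahat j = i then 1 else w)
    {ij : κ → ι} (hmin : ∀ j i, r (ij j) j * t (ij j) j ≤ r i j * t i j) (σ : κ → ι) (i : ι) :
    load t ij i ≤ load t ahat i + ∑ j, t (σ j) j := by
  set s := univ.filter (fun j => ij j = i)
  have recommended : ∑ j ∈ s.filter (fun j => ahat j = i), t i j ≤ load t ahat i :=
    sum_le_sum_of_subset_of_nonneg (filter_subset_filter _ (subset_univ s)) fun j _ _ => ht i j
  have others : ∑ j ∈ s.filter (fun j => ahat j ≠ i), t i j ≤ ∑ j, t (σ j) j := by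
    refine (sum_le_sum fun j hj => ?_).trans
      (sum_le_sum_of_subset_of_nonneg (subset_univ _) fun j _ _ => ht (σ j) j)
    simp only [s, mem_filter, mem_univ, true_and] at hj
    obtain ⟨rfl, hne⟩ := hj
    exact le_of_min_weighted_of_ne hw hr (hmin j) hne (σ j) (ht _ j)
  rw [load, ← sum_filter_add_sum_filter_not s (fun j => ahat j = i)]
  linarith

end Scheduling

open Scheduling in
theorem stmt_10_general (n m : ℕ) (hne : (Finset.univ : Finset (Fin n)).Nonempty)
    (t : Fin n → Fin m → ℝ) (ht : ∀ i j, 0 ≤ t i j)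
    (β : ℝ) (hβ1 : 1 ≤ β) (hβn : β ≤ n)
    (ahat : Fin m → Fin n)
    (r : Fin n → Fin m → ℝ)
    (hr : ∀ i j, r i j = if ahat j = i then 1 else (n : ℝ) / β)
    (ij : Fin m → Fin n) (hmin : ∀ j i, r (ij j) j * t (ij j) j ≤ r i j * t i j)
    (σstar : Fin m → Fin n)
    (OPT : ℝ)
    (hOPT : OPT = Finset.univ.sup' hne
      (fun i => ∑ j ∈ Finset.univ.filter (fun j => σstar j = i), t i j)) :
    Finset.univ.sup' hne (fun i => ∑ j ∈ Finset.univ.filter (fun j => ij j = i), t i j)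
      ≤ n * OPT +
        Finset.univ.sup' hne (fun i => ∑ j ∈ Finset.univ.filter (fun j => ahat j = i), t i j) := by
  have hw : 1 ≤ (n : ℝ) / β := (one_le_div (zero_lt_one.trans_le hβ1)).2 hβn
  have total_work : ∑ j, t (σstar j) j ≤ n * OPT := by
    have h := sum_load_le_card_mul_sup' hne t σstar
    rw [Fintype.card_fin] at h
    exact hOPT ▸ h
  refine sup'_le hne _ fun i _ => ?_
  calc load t ij i ≤ load t ahat i + ∑ j, t (σstar j) j :=
        load_le_load_add_sum ht hw hr hmin σstar i
    _ ≤ univ.sup' hne (load t ahat) + n * OPT := add_le_add (le_sup' _ (mem_univ i)) total_work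
    _ = _ := add_comm _ _

/-- Alternative bound for AllocationScaledGreedy: the mechanism's makespan is at most
    n·OPT + C(t,â), i.e. at most (n + ρ̂)·OPT. -/
theorem stmt_10 (n m : ℕ) (hne : (Finset.univ : Finset (Fin n)).Nonempty)
    (t : Fin n → Fin m → ℝ) (ht : ∀ i j, 0 ≤ t i j)
    (β : ℝ) (hβ1 : 1 ≤ β) (hβn : β ≤ n)
    (ahat : Fin m → Fin n)
    (r : Fin n → Fin m → ℝ)
    (hr : ∀ i j, r i j = if ahat j = i then 1 else (n : ℝ) / β)
    (ij : Fin m → Fin n) (hmin : ∀ j i, r (ij j) j * t (ij j) j ≤ r i j * t i j)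
    (σstar : Fin m → Fin n)
    (hopt : ∀ σ : Fin m → Fin n,
      Finset.univ.sup' hne (fun i => ∑ j ∈ Finset.univ.filter (fun j => σstar j = i), t i j)
        ≤ Finset.univ.sup' hne (fun i => ∑ j ∈ Finset.univ.filter (fun j => σ j = i), t i j))
    (OPT : ℝ)
    (hOPT : OPT = Finset.univ.sup' hne
      (fun i => ∑ j ∈ Finset.univ.filter (fun j => σstar j = i), t i j))
    (hpos : 0 < OPT) :
    Finset.univ.sup' hne (fun i => ∑ j ∈ Finset.univ.filter (fun j => ij j = i), t i j)
      ≤ n * OPT +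
        Finset.univ.sup' hne (fun i => ∑ j ∈ Finset.univ.filter (fun j => ahat j = i), t i j) :=
  stmt_10_general n m hne t ht β hβ1 hβn ahat r hr ij hmin σstar OPT hOPT
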